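/- arXiv:1407.2393 — 3 statements merged into one kernel-verified Lean document; each statement's English description precedes it below -/
import Mathlib

section
/- Integrated kernel bound: there exists a dimensional constant C_d such that for all x, y ∈ ℝ^d with x ≠ y, ∫_0^1 |∂_r W_r(x−y)| dr ≤ C_d |x−y|^{−d}, where W_r(z) = π^{−d/2}(1−r²)^{−d/2} exp(−|z|²/(1−r²)). -/
/-!
On `(0, 1)` the sign of `∂_r W_r(z)` is the sign of `d (1 - r²) - 2 |z|²`, so `r ↦ W_r(z)`
increases up to a single turning point `m` and then decreases to `W_1(z) = 0`. Hence
`∫₀¹ |∂_r W_r(z)| dr = 2 W_m(z) - W_0(z) - W_1(z) ≤ 2 sup_r W_r(z)`. With `t = |z|² / (1 - r²)`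
one has `W_r(z) = π^{-d/2} |z|^{-d} t^{d/2} e^{-t}`, and `t^ν e^{-t} ≤ (ν/e)^ν`
(from `1 + x ≤ eˣ`) bounds the supremum by `π^{-d/2} (d/2e)^{d/2} |z|^{-d}`.
-/

open Real MeasureTheory Set Filter Topology

section Unimodal

variable {f f' : ℝ → ℝ} {a b m : ℝ}

theorem integral_abs_deriv_eq_sub_of_nonneg (hab : a ≤ b) (hcont : ContinuousOn f (Icc a b))
    (hderiv : ∀ x ∈ Ioo a b, HasDerivAt f (f' x) x) (hf' : ∀ x ∈ Ioo a b, 0 ≤ f' x) :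
    IntervalIntegrable (fun x => |f' x|) volume a b ∧ ∫ x in a..b, |f' x| = f b - f a := by
  have hint : IntervalIntegrable f' volume a b :=
    (intervalIntegrable_iff_integrableOn_Ioc_of_le hab).2
      (intervalIntegral.integrableOn_deriv_of_nonneg hcont hderiv hf')
  refine ⟨hint.abs, ?_⟩
  calc ∫ x in a..b, |f' x| = ∫ x in a..b, f' x := by
        simp only [intervalIntegral.integral_of_le hab, integral_Ioc_eq_integral_Ioo]
        exact setIntegral_congr_fun measurableSet_Ioo fun x hx => abs_of_nonneg (hf' x hx)
    _ = f b - f a := intervalIntegral.integral_eq_sub_of_hasDerivAt_of_le hab hcont hderiv hint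

theorem integral_abs_deriv_eq_sub_of_nonpos (hab : a ≤ b) (hcont : ContinuousOn f (Icc a b))
    (hderiv : ∀ x ∈ Ioo a b, HasDerivAt f (f' x) x) (hf' : ∀ x ∈ Ioo a b, f' x ≤ 0) :
    IntervalIntegrable (fun x => |f' x|) volume a b ∧ ∫ x in a..b, |f' x| = f a - f b := by
  have h := integral_abs_deriv_eq_sub_of_nonneg (f := -f) (f' := -f') hab hcont.neg
    (fun x hx => (hderiv x hx).neg) fun x hx => neg_nonneg.2 (hf' x hx)
  simp only [Pi.neg_apply, abs_neg] at h
  exact ⟨h.1, by rw [h.2]; ring⟩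

theorem integral_abs_deriv_eq_of_unimodal (ham : a ≤ m) (hmb : m ≤ b)
    (hcont : ContinuousOn f (Icc a b)) (hderiv : ∀ x ∈ Ioo a b, HasDerivAt f (f' x) x)
    (hinc : ∀ x ∈ Ioo a m, 0 ≤ f' x) (hdec : ∀ x ∈ Ioo m b, f' x ≤ 0) :
    ∫ x in a..b, |f' x| = 2 * f m - f a - f b := by
  obtain ⟨hint₁, hup⟩ := integral_abs_deriv_eq_sub_of_nonneg ham
    (hcont.mono (Icc_subset_Icc_right hmb))
    (fun x hx => hderiv x ⟨hx.1, hx.2.trans_le hmb⟩) hinc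
  obtain ⟨hint₂, hdown⟩ := integral_abs_deriv_eq_sub_of_nonpos hmb
    (hcont.mono (Icc_subset_Icc_left ham))
    (fun x hx => hderiv x ⟨ham.trans_lt hx.1, hx.2⟩) hdec
  rw [← intervalIntegral.integral_add_adjacent_intervals hint₁ hint₂, hup, hdown]
  ring

end Unimodal

theorem rpow_mul_exp_neg_le {ν t : ℝ} (hν : 0 ≤ ν) (ht : 0 ≤ t) :
    t ^ ν * exp (-t) ≤ (ν / exp 1) ^ ν := by
  rcases hν.eq_or_lt with rfl | hν
  · simpa using ht
  have key : (t / ν) ^ ν ≤ exp (t / ν - 1) ^ ν :=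
    rpow_le_rpow (by positivity) (by linarith [add_one_le_exp (t / ν - 1)]) hν.le
  rw [← exp_mul, div_rpow ht hν.le, div_le_iff₀ (by positivity),
    show (t / ν - 1) * ν = t - ν by field_simp] at key
  rw [div_rpow hν.le (exp_pos 1).le, ← exp_mul, one_mul, le_div_iff₀ (exp_pos ν)]
  calc t ^ ν * exp (-t) * exp ν ≤ exp (t - ν) * ν ^ ν * exp (-t) * exp ν := by gcongr
    _ = ν ^ ν := by rw [mul_comm (exp _), mul_assoc, mul_assoc, ← exp_add, ← exp_add]; simp

theorem exists_turning_point_mul_one_sub_sq {ν a : ℝ} (hν : 0 < ν) (ha : 0 < a) :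
    ∃ m ∈ Ico (0 : ℝ) 1, (∀ r ∈ Ioo 0 m, 2 * a ≤ ν * (1 - r ^ 2)) ∧
      ∀ r ∈ Ioo m 1, ν * (1 - r ^ 2) ≤ 2 * a := by
  set q := max 0 (1 - 2 * a / ν)
  have hq : 0 ≤ q := le_max_left _ _
  have hq1 : q < 1 := max_lt one_pos (sub_lt_self 1 (by positivity))
  have hle : ν * (1 - q) ≤ 2 * a := by
    have := le_max_right 0 (1 - 2 * a / ν)
    have : ν * (2 * a / ν) = 2 * a := by field_simp
    nlinarith
  have heq : 0 < q → ν * (1 - q) = 2 * a := fun h => by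
    rcases max_choice 0 (1 - 2 * a / ν) with h' | h'
    · exact absurd h' h.ne'
    · rw [show q = 1 - 2 * a / ν from h']; field_simp; ring
  have hm : √q ^ 2 = q := sq_sqrt hq
  refine ⟨√q, ⟨sqrt_nonneg q, (sqrt_lt' one_pos).2 (by simpa using hq1)⟩,
    fun r hr => ?_, fun r hr => ?_⟩
  · have hr2 : r ^ 2 < q := by nlinarith [hr.1, hr.2]
    nlinarith [heq (by nlinarith)]
  · have hr2 : q < r ^ 2 := by nlinarith [hr.1, sqrt_nonneg q]
    nlinarith

/-- `W_r(z)` with `a = |z|²`: the heat kernel at time `(1 - r²) / 4`. -/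
noncomputable def kernelW (d : ℕ) (a r : ℝ) : ℝ :=
  π ^ (-(d : ℝ) / 2) * (1 - r ^ 2) ^ (-(d : ℝ) / 2) * exp (-a / (1 - r ^ 2))

section kernelW

variable {d : ℕ} {a r : ℝ}

theorem kernelW_pos (hr : r ^ 2 < 1) : 0 < kernelW d a r := by
  have : 0 < 1 - r ^ 2 := by linarith
  unfold kernelW; positivity

/-- At `r = 1` the formula reads `0 ^ (-d/2) * exp (-a / 0)`, which Lean evaluates to `0`,
the limit of `W_r` as `r → 1`. -/
theorem kernelW_one (hd : d ≠ 0) : kernelW d a 1 = 0 := by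
  have : -(d : ℝ) / 2 ≠ 0 := by simp [hd]
  simp [kernelW, zero_rpow this]

theorem kernelW_eq_rpow_mul_exp (ha : 0 < a) (hr : r ^ 2 < 1) :
    kernelW d a r = π ^ (-(d : ℝ) / 2) * a ^ (-(d : ℝ) / 2) *
      ((a / (1 - r ^ 2)) ^ ((d : ℝ) / 2) * exp (-(a / (1 - r ^ 2)))) := by
  have hu : 0 < 1 - r ^ 2 := by linarith
  rw [kernelW, div_rpow ha.le hu.le, neg_div, rpow_neg ha.le, rpow_neg hu.le, neg_div]
  field_simp

theorem hasDerivAt_kernelW (hr : r ^ 2 < 1) :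
    HasDerivAt (kernelW d a)
      (kernelW d a r * (r * (d * (1 - r ^ 2) - 2 * a) / (1 - r ^ 2) ^ 2)) r := by
  have hu : 0 < 1 - r ^ 2 := by linarith
  have hu' : HasDerivAt (fun s : ℝ => 1 - s ^ 2) (-(2 * r)) r := by
    simpa using (hasDerivAt_pow 2 r).const_sub 1
  have h := ((hu'.rpow_const (p := -(d : ℝ) / 2) (Or.inl hu.ne')).const_mul
    (π ^ (-(d : ℝ) / 2))).mul ((hasDerivAt_const r (-a)).div hu' hu.ne').exp
  refine h.congr_deriv ?_
  rw [rpow_sub_one hu.ne', kernelW]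
  simp only [Pi.div_apply]
  field_simp
  ring

theorem kernelW_le (ha : 0 < a) (hr : r ^ 2 < 1) :
    kernelW d a r ≤
      π ^ (-(d : ℝ) / 2) * ((d / 2) / exp 1) ^ ((d : ℝ) / 2) * a ^ (-(d : ℝ) / 2) := by
  rw [kernelW_eq_rpow_mul_exp ha hr, mul_right_comm]
  gcongr
  exact rpow_mul_exp_neg_le (by positivity) (div_pos ha (by linarith)).le

theorem tendsto_kernelW_nhdsLT_one (ha : 0 < a) : Tendsto (kernelW d a) (𝓝[<] 1) (𝓝 0) := by
  have hIoo : ∀ᶠ r in 𝓝[<] (1 : ℝ), r ∈ Ioo (0 : ℝ) 1 := Ioo_mem_nhdsLT one_pos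
  have hu : Tendsto (fun r : ℝ => 1 - r ^ 2) (𝓝[<] 1) (𝓝[>] 0) := by
    refine tendsto_nhdsWithin_of_tendsto_nhds_of_eventually_within _ ?_ ?_
    · have : Tendsto (fun r : ℝ => 1 - r ^ 2) (𝓝 1) (𝓝 (1 - 1 ^ 2)) :=
        ((continuous_const.sub (continuous_pow 2)).tendsto 1)
      exact tendsto_nhdsWithin_of_tendsto_nhds (by simpa using this)
    · filter_upwards [hIoo] with r hr
      exact sub_pos.2 (pow_lt_one₀ hr.1.le hr.2 two_ne_zero)
  have ht : Tendsto (fun r : ℝ => a / (1 - r ^ 2)) (𝓝[<] 1) atTop := by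
    simpa only [div_eq_mul_inv, Function.comp_def] using
      (tendsto_inv_nhdsGT_zero.comp hu).const_mul_atTop ha
  have hg := (tendsto_rpow_mul_exp_neg_mul_atTop_nhds_zero ((d : ℝ) / 2) 1 one_pos).comp ht
  have := (tendsto_const_nhds (x := π ^ (-(d : ℝ) / 2) * a ^ (-(d : ℝ) / 2))).mul hg
  rw [mul_zero] at this
  refine this.congr' ?_
  filter_upwards [hIoo] with r hr
  rw [kernelW_eq_rpow_mul_exp ha (pow_lt_one₀ hr.1.le hr.2 two_ne_zero)]
  simp

theorem continuousOn_kernelW (hd : d ≠ 0) (ha : 0 < a) :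
    ContinuousOn (kernelW d a) (Icc 0 1) := by
  intro r hr
  rcases hr.2.lt_or_eq with hr1 | rfl
  · exact (hasDerivAt_kernelW (pow_lt_one₀ hr.1 hr1 two_ne_zero)).continuousAt.continuousWithinAt
  · have h : ContinuousWithinAt (kernelW d a) (Iio 1) 1 := by
      rw [ContinuousWithinAt, kernelW_one hd]
      exact tendsto_kernelW_nhdsLT_one ha
    exact (continuousWithinAt_Iio_iff_Iic.1 h).mono Icc_subset_Iic_self

theorem deriv_kernelW (hr : r ^ 2 < 1) :
    deriv (kernelW d a) r = kernelW d a r * (r * (d * (1 - r ^ 2) - 2 * a) / (1 - r ^ 2) ^ 2) :=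
  (hasDerivAt_kernelW hr).deriv

theorem deriv_kernelW_nonneg (hr₀ : 0 ≤ r) (hr : r ^ 2 < 1) (h : 2 * a ≤ d * (1 - r ^ 2)) :
    0 ≤ deriv (kernelW d a) r := by
  rw [deriv_kernelW hr]
  have := kernelW_pos (d := d) (a := a) hr
  have : 0 ≤ d * (1 - r ^ 2) - 2 * a := by linarith
  positivity

theorem deriv_kernelW_nonpos (hr₀ : 0 ≤ r) (hr : r ^ 2 < 1) (h : d * (1 - r ^ 2) ≤ 2 * a) :
    deriv (kernelW d a) r ≤ 0 := by
  rw [deriv_kernelW hr]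
  exact mul_nonpos_of_nonneg_of_nonpos (kernelW_pos hr).le
    (div_nonpos_of_nonpos_of_nonneg
      (mul_nonpos_of_nonneg_of_nonpos hr₀ (by linarith)) (sq_nonneg _))

theorem integral_abs_deriv_kernelW_le (hd : d ≠ 0) (ha : 0 < a) :
    ∫ r in (0 : ℝ)..1, |deriv (kernelW d a) r| ≤
      2 * (π ^ (-(d : ℝ) / 2) * ((d / 2) / exp 1) ^ ((d : ℝ) / 2) * a ^ (-(d : ℝ) / 2)) := by
  obtain ⟨m, hm, hinc, hdec⟩ :=
    exists_turning_point_mul_one_sub_sq (ν := d) (by positivity) ha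
  have hsq : ∀ {r : ℝ}, 0 ≤ r → r < 1 → r ^ 2 < 1 := fun h₀ h₁ => pow_lt_one₀ h₀ h₁ two_ne_zero
  rw [integral_abs_deriv_eq_of_unimodal hm.1 hm.2.le (continuousOn_kernelW hd ha)
    (fun r hr => (hasDerivAt_kernelW (hsq hr.1.le hr.2)).differentiableAt.hasDerivAt)
    (fun r hr => deriv_kernelW_nonneg hr.1.le (hsq hr.1.le (hr.2.trans hm.2)) (hinc r hr))
    (fun r hr => deriv_kernelW_nonpos (hm.1.trans hr.1.le) (hsq (hm.1.trans hr.1.le) hr.2)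
      (hdec r hr)),
    kernelW_one hd]
  have := kernelW_le (d := d) ha (hsq hm.1 hm.2)
  have := kernelW_pos (d := d) (a := a) (r := 0) (by norm_num)
  linarith

end kernelW

theorem stmt_9_general (d : ℕ) :
    ∃ C : ℝ, 0 < C ∧ ∀ x y : EuclideanSpace ℝ (Fin d), x ≠ y →
      ∫ r in Set.Ioo (0 : ℝ) 1,
        |deriv (fun s : ℝ => Real.pi ^ (-(d : ℝ) / 2) *
          (1 - s ^ 2) ^ (-(d : ℝ) / 2) *
          Real.exp (-‖x - y‖ ^ 2 / (1 - s ^ 2))) r|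
        ≤ C * ‖x - y‖ ^ (-(d : ℝ)) := by
  rcases Nat.eq_zero_or_pos d with rfl | hd
  · exact ⟨1, one_pos, fun x y hxy => absurd (Subsingleton.elim x y) hxy⟩
  refine ⟨2 * (π ^ (-(d : ℝ) / 2) * ((d / 2) / exp 1) ^ ((d : ℝ) / 2)), by positivity,
    fun x y hxy => ?_⟩
  have hxy' : 0 < ‖x - y‖ := norm_pos_iff.2 (sub_ne_zero.2 hxy)
  have hpow : (‖x - y‖ ^ 2) ^ (-(d : ℝ) / 2) = ‖x - y‖ ^ (-(d : ℝ)) := by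
    rw [← rpow_natCast, ← rpow_mul hxy'.le]; congr 1; push_cast; ring
  calc _ = ∫ r in (0 : ℝ)..1, |deriv (kernelW d (‖x - y‖ ^ 2)) r| := by
        rw [intervalIntegral.integral_of_le zero_le_one, integral_Ioc_eq_integral_Ioo]; rfl
    _ ≤ _ := integral_abs_deriv_kernelW_le hd.ne' (by positivity)
    _ = _ := by rw [hpow]; ring

/-- Integrated kernel bound: `∫_0^1 |∂_r W_r(x−y)| dr ≤ C_d |x−y|^{−d}` for `x ≠ y`,
where `W_r(z) = π^{−d/2}(1−r²)^{−d/2} exp(−|z|²/(1−r²))`. -/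
theorem stmt_9 (d : ℕ) (hd : 1 ≤ d) :
    ∃ C : ℝ, 0 < C ∧ ∀ x y : EuclideanSpace ℝ (Fin d), x ≠ y →
      ∫ r in Set.Ioo (0 : ℝ) 1,
        |deriv (fun s : ℝ => Real.pi ^ (-(d : ℝ) / 2) *
          (1 - s ^ 2) ^ (-(d : ℝ) / 2) *
          Real.exp (-‖x - y‖ ^ 2 / (1 - s ^ 2))) r|
        ≤ C * ‖x - y‖ ^ (-(d : ℝ)) :=
  stmt_9_general d
end

section
/- For (x,y) in the local region N₂ and 0 < r < 1 one has the bound |∂_r M_r(x,y)| ≤ C_d (1−r)^{−d/2−1} exp(−|x−y|²/(4(1−r))); consequently ∫_0^1 |∂_r M_r(x,y)| dr ≤ C_d |x−y|^{−d} for (x,y) ∈ N₂ with x ≠ y. -/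
/-!
Put `t = 1 - r`. Then `∂_r M_r = M_r · L_r`, where the logarithmic derivative satisfies
`|L_r| ≤ d/t + 6 (|x - y|/t)² + 7 |x|²`. Writing `r x - y = (x - y) - t x`, the local condition,
in the weak form `|x - y| |x| ≤ 2`, gives `|r x - y|² / (1 - r²) ≥ |x - y|²/(2t) - 2 + t |x|²/2`.
So `exp (-|r x - y|² / (1 - r²))` provides `e²`, two factors `exp (-|x - y|²/(4t))` and one factor
`exp (-t |x|²/2)`, and each polynomial term of `|L_r|` is absorbed by one of them through
`v e^{-v} ≤ 1`. This gives the pointwise bound.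

For the integral, substitute `t = 1 - r` and put `c = |x - y|²/4`. Split `(0, ∞)` at `c`.
On `(0, c]` the integrand `t^{-d/2-1} e^{-c/t}` is at most a constant times `c^{-d/2-1}`, because
`v^a e^{-v}` is bounded. On `(c, ∞)` it is at most `t^{-d/2-1}`, whose integral is `(2/d) c^{-d/2}`.
-/

open Real MeasureTheory Set
open scoped Nat RealInnerProductSpace

lemma mul_exp_neg_le_one (v : ℝ) : v * exp (-v) ≤ 1 := by
  rw [exp_neg, ← div_eq_mul_inv, div_le_one (exp_pos v)]
  linarith [add_one_le_exp v]

lemma rpow_mul_exp_neg_le_s11 {a v : ℝ} {n : ℕ} (ha : 0 ≤ a) (han : a ≤ n) (hv : 0 ≤ v) :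
    v ^ a * exp (-v) ≤ n ! + 1 := by
  have hpow : v ^ a ≤ v ^ n + 1 := by
    rcases le_total v 1 with h | h
    · linarith [rpow_le_one hv h ha, pow_nonneg hv n]
    · linarith [rpow_le_rpow_of_exponent_le h han, rpow_natCast v n]
  have hfac : v ^ n * exp (-v) ≤ n ! := by
    rw [exp_neg, ← div_eq_mul_inv, div_le_iff₀ (exp_pos v)]
    rw [← div_le_iff₀' (by positivity)]
    exact pow_div_factorial_le_exp v hv n
  calc v ^ a * exp (-v) ≤ (v ^ n + 1) * exp (-v) := by gcongr
    _ = v ^ n * exp (-v) + exp (-v) := by ring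
    _ ≤ n ! + 1 := add_le_add hfac (exp_le_one_iff.2 (by linarith))

lemma rpow_neg_mul_exp_neg_div_le {a c t : ℝ} {n : ℕ} (ha : 0 ≤ a) (han : a ≤ n)
    (hc : 0 < c) (ht : 0 < t) :
    t ^ (-a) * exp (-c / t) ≤ (n ! + 1) * c ^ (-a) := by
  have hsplit : t ^ (-a) = c ^ (-a) * (c / t) ^ a := by
    rw [div_rpow hc.le ht.le, rpow_neg hc.le, rpow_neg ht.le]
    field_simp [(rpow_pos_of_pos hc a).ne']
  rw [hsplit, neg_div, mul_assoc, mul_comm _ (c ^ (-a))]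
  gcongr
  exact rpow_mul_exp_neg_le_s11 ha han (by positivity)

lemma add_mul_exp_neg_mul_exp_neg_le {d a b v w : ℝ} (hd : 0 ≤ d) (ha : 0 ≤ a) (hb : 0 ≤ b)
    (hv : 0 ≤ v) (hw : 0 ≤ w) :
    (d + a * v + b * w) * (exp (-v) * exp (-w)) ≤ d + a + b := by
  have hev : exp (-v) ≤ 1 := exp_le_one_iff.2 (by linarith)
  have hew : exp (-w) ≤ 1 := exp_le_one_iff.2 (by linarith)
  have hv1 := mul_exp_neg_le_one v
  have hw1 := mul_exp_neg_le_one w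
  calc (d + a * v + b * w) * (exp (-v) * exp (-w))
      = d * (exp (-v) * exp (-w)) + a * (v * exp (-v) * exp (-w))
        + b * (w * exp (-w) * exp (-v)) := by ring
    _ ≤ d * (1 * 1) + a * (1 * 1) + b * (1 * 1) := by gcongr
    _ = d + a + b := by ring

lemma gaussian_factor_mul_exp_neg_le {d t u A q : ℝ} (hd : 0 ≤ d) (ht : 0 < t)
    (hq : u ^ 2 / (2 * t) - 2 + t * A ^ 2 / 2 ≤ q) :
    (d / t + 6 * (u / t) ^ 2 + 7 * A ^ 2) * exp (-q)
      ≤ exp 2 * (d + 38) / t * exp (-u ^ 2 / (4 * t)) := by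
  set v := u ^ 2 / (4 * t)
  set w := t * A ^ 2 / 2
  have hfactor : d / t + 6 * (u / t) ^ 2 + 7 * A ^ 2 = (d + 24 * v + 14 * w) / t := by
    simp only [v, w]; field_simp; ring
  have hv : 0 ≤ v := by positivity
  have hw : 0 ≤ w := by positivity
  have h2v : u ^ 2 / (2 * t) = 2 * v := by simp only [v]; field_simp; ring
  have hexp : exp (-q) ≤ exp 2 * exp (-v) * (exp (-v) * exp (-w)) := by
    rw [← exp_add, ← exp_add, ← exp_add]
    gcongr
    linarith
  have hpoly := add_mul_exp_neg_mul_exp_neg_le hd (by norm_num : (0 : ℝ) ≤ 24)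
    (by norm_num : (0 : ℝ) ≤ 14) hv hw
  rw [hfactor]
  calc (d + 24 * v + 14 * w) / t * exp (-q)
      ≤ (d + 24 * v + 14 * w) / t * (exp 2 * exp (-v) * (exp (-v) * exp (-w))) := by
        gcongr
    _ = exp 2 * exp (-v) / t * ((d + 24 * v + 14 * w) * (exp (-v) * exp (-w))) := by ring
    _ ≤ exp 2 * exp (-v) / t * (d + 24 + 14) := by gcongr
    _ = exp 2 * (d + 38) / t * exp (-u ^ 2 / (4 * t)) := by simp only [v, neg_div]; ring

lemma integrableOn_Ioc_rpow_mul_exp_neg_div {a c : ℝ} (ha : 0 ≤ a) (hc : 0 < c) :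
    IntegrableOn (fun t => t ^ (-a) * exp (-c / t)) (Ioc 0 c) := by
  refine Measure.integrableOn_of_bounded (M := (⌈a⌉₊ ! + 1) * c ^ (-a)) (by simp)
    (by fun_prop) (ae_restrict_of_forall_mem measurableSet_Ioc fun t ht => ?_)
  rw [norm_of_nonneg (by have := ht.1; positivity)]
  exact rpow_neg_mul_exp_neg_div_le ha (Nat.le_ceil a) hc ht.1

lemma integrableOn_Ioi_rpow_mul_exp_neg_div {a c : ℝ} (ha : 1 < a) (hc : 0 < c) :
    IntegrableOn (fun t => t ^ (-a) * exp (-c / t)) (Ioi c) := by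
  refine (integrableOn_Ioi_rpow_of_lt (a := -a) (by linarith) hc).mono' (by fun_prop)
    (ae_restrict_of_forall_mem measurableSet_Ioi fun t ht => ?_)
  have ht0 : 0 < t := hc.trans ht
  rw [norm_of_nonneg (by positivity)]
  exact mul_le_of_le_one_right (by positivity)
    (exp_le_one_iff.2 (div_nonpos_of_nonpos_of_nonneg (by linarith) ht0.le))

lemma integral_Ioi_rpow_mul_exp_neg_div_le {a c : ℝ} {n : ℕ} (ha : 1 < a) (han : a ≤ n)
    (hc : 0 < c) :
    IntegrableOn (fun t => t ^ (-a) * exp (-c / t)) (Ioi 0) ∧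
      ∫ t in Ioi 0, t ^ (-a) * exp (-c / t) ≤ (n ! + 1 + 1 / (a - 1)) * c ^ (1 - a) := by
  have hnear := integrableOn_Ioc_rpow_mul_exp_neg_div (a := a) (by linarith) hc
  have hfar := integrableOn_Ioi_rpow_mul_exp_neg_div ha hc
  rw [← Ioc_union_Ioi_eq_Ioi hc.le]
  refine ⟨hnear.union hfar, ?_⟩
  rw [setIntegral_union Ioc_disjoint_Ioi_same measurableSet_Ioi hnear hfar]
  have hnear_le : ∫ t in Ioc 0 c, t ^ (-a) * exp (-c / t) ≤ (n ! + 1) * c ^ (1 - a) := by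
    calc ∫ t in Ioc 0 c, t ^ (-a) * exp (-c / t)
        ≤ ∫ _ in Ioc 0 c, (n ! + 1) * c ^ (-a) :=
          setIntegral_mono_on hnear (integrableOn_const (by simp)) measurableSet_Ioc
            fun t ht => rpow_neg_mul_exp_neg_div_le (by linarith) han hc ht.1
      _ = (n ! + 1) * c ^ (1 - a) := by
          rw [setIntegral_const, Real.volume_real_Ioc_of_le hc.le, smul_eq_mul, sub_zero,
            sub_eq_add_neg, rpow_add hc, rpow_one]
          ring
  have hfar_le : ∫ t in Ioi c, t ^ (-a) * exp (-c / t) ≤ 1 / (a - 1) * c ^ (1 - a) := by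
    calc ∫ t in Ioi c, t ^ (-a) * exp (-c / t)
        ≤ ∫ t in Ioi c, t ^ (-a) :=
          setIntegral_mono_on hfar (integrableOn_Ioi_rpow_of_lt (by linarith) hc)
            measurableSet_Ioi fun t ht => mul_le_of_le_one_right
              (rpow_nonneg (hc.trans ht).le _)
              (exp_le_one_iff.2 (div_nonpos_of_nonpos_of_nonneg (by linarith) (hc.trans ht).le))
      _ = 1 / (a - 1) * c ^ (1 - a) := by
          rw [integral_Ioi_rpow_of_lt (by linarith) hc, neg_add_eq_sub,
            show 1 - a = -(a - 1) by ring, div_neg]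
          ring
  linarith

lemma integrableOn_Ioo_comp_one_sub {f : ℝ → ℝ} (hf : IntegrableOn f (Ioc 0 1)) :
    IntegrableOn (fun r => f (1 - r)) (Ioo 0 1) := by
  have h := ((intervalIntegrable_iff_integrableOn_Ioc_of_le zero_le_one).2 hf).comp_sub_left 1
  simp only [sub_zero, sub_self] at h
  exact ((intervalIntegrable_iff_integrableOn_Ioc_of_le zero_le_one).1 h.symm).mono_set
    Ioo_subset_Ioc_self

lemma integral_Ioo_comp_one_sub (f : ℝ → ℝ) :
    ∫ r in Ioo 0 1, f (1 - r) = ∫ t in Ioo 0 1, f t := by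
  simp only [← integral_Ioc_eq_integral_Ioo, ← intervalIntegral.integral_of_le zero_le_one,
    intervalIntegral.integral_comp_sub_left, sub_zero, sub_self]

lemma integral_Ioo_one_sub_rpow_mul_exp_neg_div_le {a c : ℝ} {n : ℕ} (ha : 1 < a)
    (han : a ≤ n) (hc : 0 < c) :
    IntegrableOn (fun r => (1 - r) ^ (-a) * exp (-c / (1 - r))) (Ioo 0 1) ∧
      ∫ r in Ioo 0 1, (1 - r) ^ (-a) * exp (-c / (1 - r))
        ≤ (n ! + 1 + 1 / (a - 1)) * c ^ (1 - a) := by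
  obtain ⟨hint, hle⟩ := integral_Ioi_rpow_mul_exp_neg_div_le ha han hc
  refine ⟨integrableOn_Ioo_comp_one_sub (hint.mono_set Ioc_subset_Ioi_self), ?_⟩
  rw [integral_Ioo_comp_one_sub (fun t => t ^ (-a) * exp (-c / t))]
  refine (setIntegral_mono_set hint ?_ Ioo_subset_Ioi_self.eventuallyLE).trans hle
  exact ae_restrict_of_forall_mem measurableSet_Ioi fun t ht => by
    have : 0 < t := ht
    positivity

section Mehler

variable {E : Type*} [NormedAddCommGroup E] [InnerProductSpace ℝ E]

noncomputable def mehlerKernel (d : ℝ) (x y : E) (r : ℝ) : ℝ :=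
  π ^ (-d / 2) * (1 - r ^ 2) ^ (-d / 2) * exp (-‖r • x - y‖ ^ 2 / (1 - r ^ 2))

noncomputable def mehlerLogDeriv (d : ℝ) (x y : E) (r : ℝ) : ℝ :=
  d * r / (1 - r ^ 2) - 2 * ⟪r • x - y, x⟫ / (1 - r ^ 2) -
    2 * r * ‖r • x - y‖ ^ 2 / (1 - r ^ 2) ^ 2

lemma hasDerivAt_mehlerKernel (d : ℝ) (x y : E) {r : ℝ} (hr : r ^ 2 < 1) :
    HasDerivAt (mehlerKernel d x y) (mehlerKernel d x y r * mehlerLogDeriv d x y r) r := by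
  have hS : 1 - r ^ 2 ≠ 0 := by linarith
  have hS' : HasDerivAt (fun s : ℝ => 1 - s ^ 2) (-(2 * r)) r := by
    simpa using (hasDerivAt_pow 2 r).const_sub 1
  have hQ : HasDerivAt (fun s : ℝ => ‖s • x - y‖ ^ 2) (2 * ⟪r • x - y, x⟫) r := by
    simpa using (((hasDerivAt_id r).smul_const x).sub_const y).norm_sq
  have := ((hS'.rpow_const (p := -d / 2) (Or.inl hS)).const_mul (π ^ (-d / 2))).mul
    (hQ.neg.div hS' hS).exp
  refine this.congr_deriv ?_
  simp only [Pi.neg_apply, Pi.div_apply, mehlerKernel, mehlerLogDeriv, rpow_sub_one hS]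
  field_simp
  ring

lemma mehlerKernel_nonneg (d : ℝ) (x y : E) {r : ℝ} (hr : r ^ 2 < 1) :
    0 ≤ mehlerKernel d x y r := by
  have : 0 < 1 - r ^ 2 := by linarith
  unfold mehlerKernel; positivity

lemma mehlerKernel_le {d r : ℝ} (x y : E) (hd : 0 ≤ d) (hr0 : 0 ≤ r) (hr1 : r < 1) :
    mehlerKernel d x y r ≤ (1 - r) ^ (-d / 2) * exp (-‖r • x - y‖ ^ 2 / (1 - r ^ 2)) := by
  have hd2 : -d / 2 ≤ 0 := by linarith
  have hpi : π ^ (-d / 2) ≤ 1 := rpow_le_one_of_one_le_of_nonpos (by linarith [pi_gt_three]) hd2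
  have hS : (1 - r ^ 2) ^ (-d / 2) ≤ (1 - r) ^ (-d / 2) :=
    rpow_le_rpow_of_nonpos (by linarith) (by nlinarith) hd2
  unfold mehlerKernel
  gcongr
  calc π ^ (-d / 2) * (1 - r ^ 2) ^ (-d / 2) ≤ 1 * (1 - r) ^ (-d / 2) :=
        mul_le_mul hpi hS (rpow_nonneg (by nlinarith) _) zero_le_one
    _ = (1 - r) ^ (-d / 2) := one_mul _

lemma abs_mehlerLogDeriv_le {d r : ℝ} (x y : E) (hd : 0 ≤ d) (hr0 : 0 ≤ r) (hr1 : r < 1) :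
    |mehlerLogDeriv d x y r| ≤ d / (1 - r) + 6 * (‖x - y‖ / (1 - r)) ^ 2 + 7 * ‖x‖ ^ 2 := by
  have ht : 0 < 1 - r := by linarith
  have htS : 1 - r ≤ 1 - r ^ 2 := by nlinarith
  set a := ‖r • x - y‖ / (1 - r) with ha_def
  have ha : a ≤ ‖x - y‖ / (1 - r) + ‖x‖ := by
    rw [div_add' _ _ _ ht.ne', div_le_div_iff_of_pos_right ht]
    calc ‖r • x - y‖ = ‖(x - y) - (1 - r) • x‖ := by congr 1; module
      _ ≤ ‖x - y‖ + ‖x‖ * (1 - r) := by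
        grw [norm_sub_le, norm_smul, norm_of_nonneg ht.le, mul_comm]
  have hS : 0 < 1 - r ^ 2 := by nlinarith
  have ha0 : 0 ≤ a := by positivity
  have h1 : |d * r / (1 - r ^ 2)| ≤ d / (1 - r) := by
    rw [abs_of_nonneg (by positivity)]
    exact div_le_div₀ hd (by nlinarith) ht htS
  have h2 : |2 * ⟪r • x - y, x⟫ / (1 - r ^ 2)| ≤ 2 * a * ‖x‖ := by
    rw [abs_div, abs_mul, abs_two, abs_of_pos hS]
    calc 2 * |⟪r • x - y, x⟫| / (1 - r ^ 2) ≤ 2 * (‖r • x - y‖ * ‖x‖) / (1 - r) := by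
          gcongr; exact abs_real_inner_le_norm _ _
      _ = 2 * a * ‖x‖ := by rw [ha_def]; ring
  have h3 : |2 * r * ‖r • x - y‖ ^ 2 / (1 - r ^ 2) ^ 2| ≤ 2 * a ^ 2 := by
    rw [abs_of_nonneg (by positivity), div_pow, mul_div_assoc]
    gcongr
    linarith
  unfold mehlerLogDeriv
  calc _ ≤ |d * r / (1 - r ^ 2)| + |2 * ⟪r • x - y, x⟫ / (1 - r ^ 2)|
        + |2 * r * ‖r • x - y‖ ^ 2 / (1 - r ^ 2) ^ 2| :=
        (abs_sub _ _).trans (add_le_add_left (abs_sub _ _) _)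
    _ ≤ _ := by
      nlinarith [mul_self_le_mul_self ha0 ha, sq_nonneg (a - ‖x‖),
        sq_nonneg (‖x - y‖ / (1 - r) - ‖x‖)]

lemma sq_div_sub_le_norm_sub_smul_sq_div {w x : E} {t S : ℝ} (hwx : ‖w‖ * ‖x‖ ≤ 2)
    (ht : 0 < t) (htS : t ≤ S) (hS : S ≤ 2 * t) :
    ‖w‖ ^ 2 / (2 * t) - 2 + t * ‖x‖ ^ 2 / 2 ≤ ‖w - t • x‖ ^ 2 / S := by
  have hN : ‖w‖ ^ 2 - 4 * t + t ^ 2 * ‖x‖ ^ 2 ≤ ‖w - t • x‖ ^ 2 := by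
    rw [norm_sub_sq_real, inner_smul_right, norm_smul, norm_of_nonneg ht.le]
    nlinarith [real_inner_le_norm w x]
  have hlhs : ‖w‖ ^ 2 / (2 * t) - 2 + t * ‖x‖ ^ 2 / 2
      = (‖w‖ ^ 2 - 4 * t + t ^ 2 * ‖x‖ ^ 2) / (2 * t) := by
    field_simp; ring
  rw [hlhs]
  rcases le_total 0 (‖w‖ ^ 2 - 4 * t + t ^ 2 * ‖x‖ ^ 2) with hpos | hneg
  · calc _ ≤ (‖w‖ ^ 2 - 4 * t + t ^ 2 * ‖x‖ ^ 2) / S :=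
          div_le_div_of_nonneg_left hpos (by linarith) hS
      _ ≤ _ := by gcongr; linarith
  · exact (div_nonpos_of_nonpos_of_nonneg hneg (by linarith)).trans
      (div_nonneg (sq_nonneg _) (by linarith))

lemma abs_deriv_mehlerKernel_le {d r : ℝ} {x y : E} (hd : 0 ≤ d) (hxy : ‖x - y‖ * ‖x‖ ≤ 2)
    (hr0 : 0 ≤ r) (hr1 : r < 1) :
    |deriv (mehlerKernel d x y) r|
      ≤ exp 2 * (d + 38) * (1 - r) ^ (-d / 2 - 1) * exp (-‖x - y‖ ^ 2 / (4 * (1 - r))) := by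
  have ht : 0 < 1 - r := by linarith
  have hr2 : r ^ 2 < 1 := by nlinarith
  have hq : ‖x - y‖ ^ 2 / (2 * (1 - r)) - 2 + (1 - r) * ‖x‖ ^ 2 / 2
      ≤ ‖r • x - y‖ ^ 2 / (1 - r ^ 2) := by
    have h := sq_div_sub_le_norm_sub_smul_sq_div hxy ht (S := 1 - r ^ 2) (by nlinarith)
      (by nlinarith)
    rwa [show (x - y) - (1 - r) • x = r • x - y by module] at h
  rw [(hasDerivAt_mehlerKernel d x y hr2).deriv, abs_mul,
    abs_of_nonneg (mehlerKernel_nonneg d x y hr2)]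
  calc mehlerKernel d x y r * |mehlerLogDeriv d x y r|
      ≤ (1 - r) ^ (-d / 2) * exp (-‖r • x - y‖ ^ 2 / (1 - r ^ 2))
          * (d / (1 - r) + 6 * (‖x - y‖ / (1 - r)) ^ 2 + 7 * ‖x‖ ^ 2) :=
        mul_le_mul (mehlerKernel_le x y hd hr0 hr1) (abs_mehlerLogDeriv_le x y hd hr0 hr1)
          (abs_nonneg _) (by positivity)
    _ = (1 - r) ^ (-d / 2) * ((d / (1 - r) + 6 * (‖x - y‖ / (1 - r)) ^ 2 + 7 * ‖x‖ ^ 2)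
          * exp (-(‖r • x - y‖ ^ 2 / (1 - r ^ 2)))) := by
        rw [neg_div (1 - r ^ 2), mul_assoc, mul_comm (exp _)]
    _ ≤ (1 - r) ^ (-d / 2)
          * (exp 2 * (d + 38) / (1 - r) * exp (-‖x - y‖ ^ 2 / (4 * (1 - r)))) :=
        mul_le_mul_of_nonneg_left (gaussian_factor_mul_exp_neg_le hd ht hq) (by positivity)
    _ = _ := by rw [rpow_sub_one ht.ne']; ring

end Mehler

lemma integral_Ioo_mehler_majorant_le {d : ℝ} (hd : 0 < d) :
    ∃ K, ∀ u : ℝ, 0 < u →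
      IntegrableOn (fun r => (1 - r) ^ (-d / 2 - 1) * exp (-u ^ 2 / (4 * (1 - r)))) (Ioo 0 1) ∧
        ∫ r in Ioo 0 1, (1 - r) ^ (-d / 2 - 1) * exp (-u ^ 2 / (4 * (1 - r))) ≤ K * u ^ (-d) := by
  refine ⟨(⌈d / 2 + 1⌉₊ ! + 1 + 2 / d) * 4 ^ (d / 2), fun u hu => ?_⟩
  have hfun : (fun r => (1 - r) ^ (-(d / 2 + 1)) * exp (-(u ^ 2 / 4) / (1 - r)))
      = fun r => (1 - r) ^ (-d / 2 - 1) * exp (-u ^ 2 / (4 * (1 - r))) := by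
    ext r
    simp only [neg_add', neg_div, div_div]
  have hpow : (u ^ 2 / 4) ^ (1 - (d / 2 + 1)) = 4 ^ (d / 2) * u ^ (-d) := by
    rw [show 1 - (d / 2 + 1) = -(d / 2) by ring, div_rpow (by positivity) (by norm_num),
      rpow_neg (by norm_num : (0 : ℝ) ≤ 4), div_inv_eq_mul, ← rpow_natCast, ← rpow_mul hu.le]
    push_cast
    ring_nf
  obtain ⟨hint, hle⟩ := integral_Ioo_one_sub_rpow_mul_exp_neg_div_le (a := d / 2 + 1)
    (c := u ^ 2 / 4) (by linarith) (Nat.le_ceil _) (by positivity)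
  rw [hfun] at hint hle
  rw [hpow, show d / 2 + 1 - 1 = d / 2 by ring, one_div_div] at hle
  exact ⟨hint, hle.trans_eq (by ring)⟩

/-- For `(x,y)` in the local region `N₂` and `0 < r < 1`,
`|∂_r M_r(x,y)| ≤ C_d (1−r)^{−d/2−1} exp(−|x−y|²/(4(1−r)))`; consequently
`∫_0^1 |∂_r M_r(x,y)| dr ≤ C_d |x−y|^{−d}` when moreover `x ≠ y`. -/
theorem stmt_11 (d : ℕ) (hd : 1 ≤ d) :
    ∃ C : ℝ, 0 < C ∧ ∀ x y : EuclideanSpace ℝ (Fin d),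
      ‖x - y‖ ≤ 2 / (1 + ‖x‖ + ‖y‖) →
      (∀ r ∈ Set.Ioo (0 : ℝ) 1,
        |deriv (fun s : ℝ => Real.pi ^ (-(d : ℝ) / 2) *
            (1 - s ^ 2) ^ (-(d : ℝ) / 2) *
            Real.exp (-‖s • x - y‖ ^ 2 / (1 - s ^ 2))) r|
          ≤ C * (1 - r) ^ (-(d : ℝ) / 2 - 1) *
              Real.exp (-‖x - y‖ ^ 2 / (4 * (1 - r)))) ∧
      (x ≠ y →
        ∫ r in Set.Ioo (0 : ℝ) 1,
          |deriv (fun s : ℝ => Real.pi ^ (-(d : ℝ) / 2) *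
              (1 - s ^ 2) ^ (-(d : ℝ) / 2) *
              Real.exp (-‖s • x - y‖ ^ 2 / (1 - s ^ 2))) r|
          ≤ C * ‖x - y‖ ^ (-(d : ℝ))) := by
  obtain ⟨K, hK⟩ := integral_Ioo_mehler_majorant_le (d := d) (Nat.cast_pos.2 hd)
  set C₀ := exp 2 * ((d : ℝ) + 38)
  refine ⟨C₀ * max 1 K, by positivity, fun x y hxy => ?_⟩
  have hloc : ‖x - y‖ * ‖x‖ ≤ 2 := by
    rw [le_div_iff₀ (by positivity)] at hxy
    nlinarith [norm_nonneg x, norm_nonneg y, norm_nonneg (x - y)]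
  have hpt : ∀ r ∈ Ioo (0 : ℝ) 1, |deriv (mehlerKernel (d : ℝ) x y) r|
      ≤ C₀ * ((1 - r) ^ (-(d : ℝ) / 2 - 1) * exp (-‖x - y‖ ^ 2 / (4 * (1 - r)))) :=
    fun r hr => (abs_deriv_mehlerKernel_le (Nat.cast_nonneg d) hloc hr.1.le hr.2).trans_eq
      (mul_assoc _ _ _)
  refine ⟨fun r hr => ?_, fun hne => ?_⟩
  · have ht : 0 < 1 - r := by linarith [hr.2]
    rw [mul_assoc]
    refine (hpt r hr).trans ?_
    gcongr
    exact le_mul_of_one_le_right (by positivity) (le_max_left 1 K)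
  · obtain ⟨hint, hle⟩ := hK ‖x - y‖ (norm_pos_iff.2 (sub_ne_zero.2 hne))
    calc ∫ r in Ioo (0 : ℝ) 1, |deriv (mehlerKernel (d : ℝ) x y) r|
        ≤ ∫ r in Ioo (0 : ℝ) 1,
            C₀ * ((1 - r) ^ (-(d : ℝ) / 2 - 1) * exp (-‖x - y‖ ^ 2 / (4 * (1 - r)))) :=
          integral_mono_of_nonneg (Filter.Eventually.of_forall fun _ => abs_nonneg _)
            (hint.const_mul C₀) (ae_restrict_of_forall_mem measurableSet_Ioo hpt)
      _ ≤ C₀ * (K * ‖x - y‖ ^ (-(d : ℝ))) := by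
          rw [integral_const_mul]; gcongr
      _ ≤ C₀ * max 1 K * ‖x - y‖ ^ (-(d : ℝ)) := by
          rw [← mul_assoc]; gcongr; exact le_max_right 1 K
end

section
/- For all real t, s and all u ∈ (−1, 1) one has |t − s| / √(t² + s² − 2tsu) ≤ 2(1+u)^{−1}, whenever t² + s² − 2tsu > 0. -/
open Real

/-- For all real `t, s` and `u ∈ (−1,1)` with `t² + s² − 2tsu > 0`,
`|t − s| / √(t² + s² − 2tsu) ≤ 2(1+u)⁻¹`. -/
theorem stmt_12 (t s u : ℝ) (hu : u ∈ Set.Ioo (-1 : ℝ) 1)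
    (h : 0 < t ^ 2 + s ^ 2 - 2 * t * s * u) :
    |t - s| / Real.sqrt (t ^ 2 + s ^ 2 - 2 * t * s * u) ≤ 2 * (1 + u)⁻¹ := by
  obtain ⟨hu1, hu2⟩ := hu
  have h1 : 0 < 1 + u := by linarith
  have h2 : 1 + u < 2 := by linarith
  set A := t ^ 2 + s ^ 2 - 2 * t * s * u with hA
  have hr : 0 < Real.sqrt A := Real.sqrt_pos.mpr h
  have hr2 : Real.sqrt A ^ 2 = A := Real.sq_sqrt h.le
  rw [div_le_iff₀ hr]
  -- suffices: (1+u) * |t-s| ≤ 2 * sqrt A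
  have key : (1 + u) * |t - s| ≤ 2 * Real.sqrt A := by
    have h3 : 0 ≤ (1 - u) * (t + s) ^ 2 :=
      mul_nonneg (by linarith) (sq_nonneg _)
    have hsq : ((1 + u) * |t - s|) ^ 2 ≤ (2 * Real.sqrt A) ^ 2 := by
      have : ((1 + u) * |t - s|) ^ 2 = (1 + u) ^ 2 * (t - s) ^ 2 := by
        rw [mul_pow, sq_abs]
      rw [this, mul_pow, hr2]
      nlinarith [h3, h, sq_nonneg (t - s), mul_pos h1 h]
    have h4 : 0 ≤ (1 + u) * |t - s| := mul_nonneg h1.le (abs_nonneg _)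
    have h5 : 0 ≤ 2 * Real.sqrt A := by positivity
    calc (1 + u) * |t - s| = Real.sqrt (((1 + u) * |t - s|) ^ 2) := (Real.sqrt_sq h4).symm
      _ ≤ Real.sqrt ((2 * Real.sqrt A) ^ 2) := Real.sqrt_le_sqrt hsq
      _ = 2 * Real.sqrt A := Real.sqrt_sq h5
  calc |t - s| = (1 + u)⁻¹ * ((1 + u) * |t - s|) := by field_simp
    _ ≤ (1 + u)⁻¹ * (2 * Real.sqrt A) := by
        apply mul_le_mul_of_nonneg_left key (by positivity)
    _ = 2 * (1 + u)⁻¹ * Real.sqrt A := by ring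
end
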